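/- Let X be a random vector in ℝ^{d+1} with ‖X‖_{ψ2} ≤ M and E(XX^⊤) ⪰ σ²I for some σ > 0, let f be the clipped loss with parameters b ≥ 2a ≥ 4, let h(x) = (x²−1)²/4, and for λ ≥ 0 and γ = (α, β) ∈ ℝ × ℝ^d define L_λ(γ) = E f(γ^⊤X) + (λ/2)α² and L^h_λ(γ) = E h(γ^⊤X) + (λ/2)α². Then there exists m > 0, depending only on M and σ, such that ‖∇L_λ(γ)‖₂ ≥ m and ‖∇L^h_λ(γ)‖₂ ≥ m for every γ with ‖γ‖₂ ≥ 3/m. -/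

import Mathlib

/-!
Both losses have a derivative `g'` with `|g' x| ≤ |x|³ + |x|`, which lets us differentiate under
the integral once `X` has fourth moments, and with `g' x * x ≥ 6 |x| - 13`. Hence the derivative of
`L_λ` at `γ` in the direction `γ` is at least `6 E|γ⊤X| - 13`, the ridge term contributing
`λ α² ≥ 0`. For a unit vector `u`, the sub-Gaussian bound `E|u⊤X|³ ≤ 8 M³`, the covariance bound
`E (u⊤X)² ≥ σ²` and `(E Y²)² ≤ E|Y| · E|Y|³` give `E|u⊤X| ≥ σ⁴ / (8 M³) = 2 m`,
where `m = σ⁴ / (16 M³)`. So the directional derivative is at least `12 m ‖γ‖ - 13 ≥ m ‖γ‖` as soon as `m ‖γ‖ ≥ 3`, and `‖∇L_λ(γ)‖ ≥ m`.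
-/

open MeasureTheory ProbabilityTheory
open scoped RealInnerProductSpace

/-- `ℝ^d` with the Euclidean norm. -/
abbrev Vec (d : ℕ) := EuclideanSpace ℝ (Fin d)

/-- `ℝ × ℝ^d` with the Euclidean (ℓ²) norm; we identify `ℝ^{d+1}` with `ℝ × ℝ^d`,
`γ = (α, β)`. -/
abbrev Pr (d : ℕ) := WithLp 2 (ℝ × Vec d)

/-- The quartic loss `h(x) = (x² - 1)² / 4`. -/
noncomputable def hq (x : ℝ) : ℝ := (x ^ 2 - 1) ^ 2 / 4

/-- The clipped loss `f` with parameters `a < b`: it agrees with `hq` on `[-a, a]`,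
is a cubic spline on `a < |x| ≤ b` (built from `h'(a) = a³ - a` and `h''(a) = 3a² - 1`),
and is linear for `|x| > b`. -/
noncomputable def fclip (a b x : ℝ) : ℝ :=
  if |x| ≤ a then hq x
  else if |x| ≤ b then
    hq a + (a ^ 3 - a) * (|x| - a) + ((3 * a ^ 2 - 1) / 2) * (|x| - a) ^ 2
      - ((3 * a ^ 2 - 1) / (6 * (b - a))) * (|x| - a) ^ 3
  else
    (hq a + (a ^ 3 - a) * (b - a) + ((3 * a ^ 2 - 1) / 2) * (b - a) ^ 2
      - ((3 * a ^ 2 - 1) / (6 * (b - a))) * (b - a) ^ 3)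
      + ((a ^ 3 - a) + ((b - a) / 2) * (3 * a ^ 2 - 1)) * (|x| - b)

/-- The loss `L_λ(γ) = E g(γ⊤X) + (λ/2)α²` for `γ = (α, β) ∈ ℝ × ℝ^d ≅ ℝ^{d+1}`. -/
noncomputable def genLoss {d : ℕ} {Ω : Type*} [MeasurableSpace Ω] (P : Measure Ω)
    (X : Ω → Pr d) (g : ℝ → ℝ) (lam : ℝ) (γ : Pr d) : ℝ :=
  (∫ ω, g ⟪γ, X ω⟫ ∂P) + lam / 2 * ((WithLp.equiv 2 (ℝ × Vec d) γ).1) ^ 2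

noncomputable instance {d : ℕ} : MeasurableSpace (Pr d) := borel _
instance {d : ℕ} : BorelSpace (Pr d) := ⟨rfl⟩

open Set Filter

theorem hasDerivAt_ite_le {f g f' g' : ℝ → ℝ} {c : ℝ} (hf : ∀ x, HasDerivAt f (f' x) x)
    (hg : ∀ x, HasDerivAt g (g' x) x) (hc : f c = g c) (hc' : f' c = g' c) (x : ℝ) :
    HasDerivAt (fun y => if y ≤ c then f y else g y) (if x ≤ c then f' x else g' x) x := by
  rcases lt_trichotomy x c with hx | rfl | hx
  · rw [if_pos hx.le]
    refine (hf x).congr_of_eventuallyEq ?_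
    filter_upwards [Iio_mem_nhds hx] with y hy using if_pos (le_of_lt hy)
  · have hleft : HasDerivWithinAt (fun y => if y ≤ x then f y else g y) (f' x) (Iic x) x :=
      (hf x).hasDerivWithinAt.congr (fun y hy => if_pos hy) (if_pos le_rfl)
    have hright : HasDerivWithinAt (fun y => if y ≤ x then f y else g y) (f' x) (Ici x) x := by
      refine (hc' ▸ (hg x).hasDerivWithinAt).congr (fun y hy => ?_) (by simp [hc])
      split_ifs with h
      · rw [le_antisymm h hy, hc]
      · rfl
    simpa [← hasDerivWithinAt_univ] using hleft.union hright
  · rw [if_neg (not_le.2 hx)]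
    refine (hg x).congr_of_eventuallyEq ?_
    filter_upwards [Ioi_mem_nhds hx] with y hy using if_neg (not_le.2 hy)

theorem hq_hasDerivAt (x : ℝ) : HasDerivAt hq (x ^ 3 - x) x := by
  have h : HasDerivAt (fun y : ℝ => (y ^ 2 - 1) ^ 2 / 4) (2 * (x ^ 2 - 1) * (2 * x) / 4) x := by
    simpa using (((hasDerivAt_pow 2 x).sub_const 1).pow 2).div_const 4
  exact h.congr_deriv (by ring)

noncomputable def fclipCubic (a b t : ℝ) : ℝ :=
  hq a + (a ^ 3 - a) * (t - a) + ((3 * a ^ 2 - 1) / 2) * (t - a) ^ 2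
    - ((3 * a ^ 2 - 1) / (6 * (b - a))) * (t - a) ^ 3

noncomputable def fclipCubicDeriv (a b t : ℝ) : ℝ :=
  (a ^ 3 - a) + (3 * a ^ 2 - 1) * (t - a) - ((3 * a ^ 2 - 1) / (2 * (b - a))) * (t - a) ^ 2

noncomputable def fclipSlope (a b : ℝ) : ℝ := (a ^ 3 - a) + ((b - a) / 2) * (3 * a ^ 2 - 1)

noncomputable def fclipLinear (a b t : ℝ) : ℝ := fclipCubic a b b + fclipSlope a b * (t - b)

noncomputable def fclipProfile (a b t : ℝ) : ℝ :=
  if t ≤ a then hq t else if t ≤ b then fclipCubic a b t else fclipLinear a b t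

noncomputable def fclipProfileDeriv (a b t : ℝ) : ℝ :=
  if t ≤ a then t ^ 3 - t else if t ≤ b then fclipCubicDeriv a b t else fclipSlope a b

noncomputable def fclipDeriv (a b x : ℝ) : ℝ :=
  if x ≤ 0 then -fclipProfileDeriv a b (-x) else fclipProfileDeriv a b x

theorem fclipCubic_hasDerivAt {a b : ℝ} (hab : a ≠ b) (t : ℝ) :
    HasDerivAt (fclipCubic a b) (fclipCubicDeriv a b t) t := by
  have hs : HasDerivAt (fun y : ℝ => y - a) 1 t := (hasDerivAt_id t).sub_const a
  have h := (((hs.const_mul (a ^ 3 - a)).const_add (hq a)).add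
    ((hs.pow 2).const_mul ((3 * a ^ 2 - 1) / 2))).sub ((hs.pow 3).const_mul
      ((3 * a ^ 2 - 1) / (6 * (b - a))))
  refine h.congr_deriv ?_
  have : b - a ≠ 0 := sub_ne_zero.2 hab.symm
  simp only [fclipCubicDeriv]
  field_simp
  ring

theorem fclipLinear_hasDerivAt (a b t : ℝ) :
    HasDerivAt (fclipLinear a b) (fclipSlope a b) t := by
  have h := (((hasDerivAt_id t).sub_const b).const_mul (fclipSlope a b)).const_add
    (fclipCubic a b b)
  rwa [mul_one] at h

theorem fclipProfile_hasDerivAt {a b : ℝ} (hab : a < b) (t : ℝ) :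
    HasDerivAt (fclipProfile a b) (fclipProfileDeriv a b t) t := by
  have hinner := hasDerivAt_ite_le (c := b) (f := fclipCubic a b) (g := fclipLinear a b)
    (fclipCubic_hasDerivAt hab.ne) (fclipLinear_hasDerivAt a b) (by simp [fclipLinear]) (by
      simp only [fclipCubicDeriv, fclipSlope]
      field_simp [sub_ne_zero.2 hab.ne']
      ring)
  refine hasDerivAt_ite_le (c := a) hq_hasDerivAt hinner ?_ ?_ t
  · simp [hab.le, fclipCubic]
  · simp [hab.le, fclipCubicDeriv]

theorem fclip_eq_ite (a b : ℝ) :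
    fclip a b = fun x => if x ≤ 0 then fclipProfile a b (-x) else fclipProfile a b x := by
  ext x
  have habs : |x| = if x ≤ 0 then -x else x := by
    split_ifs with hx
    exacts [abs_of_nonpos hx, abs_of_pos (not_le.1 hx)]
  split_ifs at habs ⊢ <;>
    simp only [fclip, fclipProfile, fclipCubic, fclipLinear, fclipSlope, hq, habs, neg_sq]

theorem fclip_hasDerivAt {a b : ℝ} (ha : 0 < a) (hab : a < b) (x : ℝ) :
    HasDerivAt (fclip a b) (fclipDeriv a b x) x := by
  rw [fclip_eq_ite]
  refine hasDerivAt_ite_le (c := 0) (f := fun y => fclipProfile a b (-y))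
    (f' := fun y => -fclipProfileDeriv a b (-y)) (fun y => ?_)
    (fclipProfile_hasDerivAt hab) (by simp) ?_ x
  · have h := (fclipProfile_hasDerivAt hab (-y)).comp y (hasDerivAt_neg y)
    rwa [mul_neg_one] at h
  · simp [fclipProfileDeriv, ha.le]

theorem six_mul_sub_le_cube_sub_mul (t : ℝ) : 6 * t - 13 ≤ (t ^ 3 - t) * t := by
  nlinarith [sq_nonneg (t - 1), sq_nonneg (t ^ 2 - 2), sq_nonneg (t ^ 2 + t - 3),
    sq_nonneg (t - 2), sq_nonneg (t ^ 2 - t - 1)]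

theorem abs_cube_sub_le (x : ℝ) : |x ^ 3 - x| ≤ |x| ^ 3 + |x| :=
  (abs_sub _ _).trans_eq (by rw [abs_pow])

theorem six_mul_abs_sub_le_cube_sub_mul (x : ℝ) : 6 * |x| - 13 ≤ (x ^ 3 - x) * x := by
  have h : (|x| ^ 3 - |x|) * |x| = (x ^ 3 - x) * x := by
    rcases le_total 0 x with hx | hx
    · rw [abs_of_nonneg hx]
    · rw [abs_of_nonpos hx]; ring
  exact h ▸ six_mul_sub_le_cube_sub_mul |x|

section ProfileDerivBounds

variable {a b t : ℝ}

theorem le_fclipProfileDeriv (ha : 1 ≤ a) (hab : a < b) (ht : a ≤ t) :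
    a ^ 3 - a ≤ fclipProfileDeriv a b t := by
  have hc : 0 ≤ 3 * a ^ 2 - 1 := by nlinarith
  unfold fclipProfileDeriv
  split_ifs with h₁ h₂
  · rw [le_antisymm h₁ ht]
  · have : (3 * a ^ 2 - 1) / (2 * (b - a)) * (t - a) ^ 2 ≤ (3 * a ^ 2 - 1) * (t - a) := by
      rw [div_mul_eq_mul_div, div_le_iff₀ (by linarith)]
      nlinarith [mul_nonneg (mul_nonneg hc (sub_nonneg.2 ht))
        (by linarith : 0 ≤ 2 * (b - a) - (t - a))]
    unfold fclipCubicDeriv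
    linarith
  · unfold fclipSlope
    nlinarith [mul_nonneg (sub_nonneg.2 hab.le) hc]

theorem fclipProfileDeriv_le (ha : 1 ≤ a) (hab : a < b) (ht : a ≤ t) :
    fclipProfileDeriv a b t ≤ t ^ 3 - t := by
  have hc : 0 ≤ 3 * a ^ 2 - 1 := by nlinarith
  -- the tangent line of the convex function `s ↦ s ^ 3 - s` at `a` stays below it on `[0, ∞)`
  have tangent : ∀ s, a ≤ s → a ^ 3 - a + (3 * a ^ 2 - 1) * (s - a) ≤ s ^ 3 - s := fun s hs => by
    nlinarith [mul_nonneg (sq_nonneg (s - a)) (by linarith : 0 ≤ s + 2 * a)]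
  unfold fclipProfileDeriv
  split_ifs with h₁ h₂
  · exact le_rfl
  · have : 0 ≤ (3 * a ^ 2 - 1) / (2 * (b - a)) * (t - a) ^ 2 :=
      mul_nonneg (div_nonneg hc (by linarith)) (sq_nonneg _)
    unfold fclipCubicDeriv
    linarith [tangent t ht]
  · have hmono : b ^ 3 - b ≤ t ^ 3 - t := by
      nlinarith [mul_nonneg (by linarith : 0 ≤ t - b)
        (by nlinarith : 0 ≤ t ^ 2 + t * b + b ^ 2 - 1)]
    unfold fclipSlope
    nlinarith [tangent b hab.le, mul_nonneg (sub_nonneg.2 hab.le) hc]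

theorem abs_fclipProfileDeriv_le (ha : 1 ≤ a) (hab : a < b) (ht : 0 ≤ t) :
    |fclipProfileDeriv a b t| ≤ t ^ 3 + t := by
  rcases le_or_gt t a with h | h
  · rw [fclipProfileDeriv, if_pos h]
    exact (abs_cube_sub_le t).trans_eq (by rw [abs_of_nonneg ht])
  · have ha3 : 0 ≤ a ^ 3 - a := by
      nlinarith [mul_nonneg (by linarith : 0 ≤ a) (by nlinarith : 0 ≤ a ^ 2 - 1)]
    have hpos := ha3.trans (le_fclipProfileDeriv ha hab h.le)
    rw [abs_of_nonneg hpos]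
    linarith [fclipProfileDeriv_le ha hab h.le]

theorem six_mul_sub_le_fclipProfileDeriv_mul (ha : 2 ≤ a) (hab : a < b) (ht : 0 ≤ t) :
    6 * t - 13 ≤ fclipProfileDeriv a b t * t := by
  rcases le_or_gt t a with h | h
  · rw [fclipProfileDeriv, if_pos h]
    exact six_mul_sub_le_cube_sub_mul t
  · have ha3 : 6 ≤ a ^ 3 - a := by
      nlinarith [mul_nonneg (by linarith : 0 ≤ a - 2) (by nlinarith : 0 ≤ a ^ 2 + 2 * a + 3)]
    have := ha3.trans (le_fclipProfileDeriv (by linarith) hab h.le)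
    nlinarith

end ProfileDerivBounds

theorem fclipDeriv_mul_self (a b x : ℝ) :
    fclipDeriv a b x * x = fclipProfileDeriv a b |x| * |x| := by
  unfold fclipDeriv
  split_ifs with hx
  · rw [abs_of_nonpos hx]; ring
  · rw [abs_of_pos (not_le.1 hx)]

theorem abs_fclipDeriv (a b x : ℝ) : |fclipDeriv a b x| = |fclipProfileDeriv a b (|x|)| := by
  unfold fclipDeriv
  split_ifs with hx
  · rw [abs_of_nonpos hx, abs_neg]
  · rw [abs_of_pos (not_le.1 hx)]

theorem abs_fclipDeriv_le {a b : ℝ} (ha : 1 ≤ a) (hab : a < b) (x : ℝ) :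
    |fclipDeriv a b x| ≤ |x| ^ 3 + |x| :=
  abs_fclipDeriv a b x ▸ abs_fclipProfileDeriv_le ha hab (abs_nonneg x)

theorem six_mul_abs_sub_le_fclipDeriv_mul {a b : ℝ} (ha : 2 ≤ a) (hab : a < b) (x : ℝ) :
    6 * |x| - 13 ≤ fclipDeriv a b x * x :=
  fclipDeriv_mul_self a b x ▸ six_mul_sub_le_fclipProfileDeriv_mul ha hab (abs_nonneg x)

theorem abs_le_of_abs_deriv_le_cube_add {g g' : ℝ → ℝ} (hg : ∀ x, HasDerivAt g (g' x) x)
    (hg' : ∀ x, |g' x| ≤ |x| ^ 3 + |x|) (s : ℝ) :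
    |g s| ≤ |g 0| + (|s| ^ 3 + |s|) * |s| := by
  have hmvt : ‖g s - g 0‖ ≤ (|s| ^ 3 + |s|) * ‖s - 0‖ := by
    refine Convex.norm_image_sub_le_of_norm_hasDerivWithin_le
      (fun y _ => (hg y).hasDerivWithinAt) (fun y hy => ?_) (convex_Icc (-|s|) |s|)
      ⟨neg_nonpos.2 (abs_nonneg s), abs_nonneg s⟩ ⟨neg_abs_le s, le_abs_self s⟩
    have hy : |y| ≤ |s| := abs_le.2 hy
    exact (hg' y).trans (by gcongr)
  rw [Real.norm_eq_abs, Real.norm_eq_abs, sub_zero] at hmvt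
  linarith [abs_sub_abs_le_abs_sub (g s) (g 0)]

theorem MeasureTheory.MemLp.integrable_mul_norm_pow_four_add_mul_norm_sq {Ω F : Type*}
    [MeasurableSpace Ω] {P : Measure Ω} [IsFiniteMeasure P] [NormedAddCommGroup F] {X : Ω → F}
    (hX : MemLp X 4 P) (c c' : ℝ) :
    Integrable (fun ω => c * ‖X ω‖ ^ 4 + c' * ‖X ω‖ ^ 2) P :=
  ((hX.integrable_norm_pow (by norm_num)).const_mul c).add
    (((hX.mono_exponent (by norm_num)).integrable_norm_pow (by norm_num)).const_mul c')

section DerivUnderIntegral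

variable {Ω E : Type*} [MeasurableSpace Ω] {P : Measure Ω} [IsFiniteMeasure P]
  [NormedAddCommGroup E] [InnerProductSpace ℝ E] {X : Ω → E}

theorem integrable_comp_inner (hX : MemLp X 4 P) {g g' : ℝ → ℝ}
    (hg : ∀ x, HasDerivAt g (g' x) x) (hg' : ∀ x, |g' x| ≤ |x| ^ 3 + |x|) (γ : E) :
    Integrable (fun ω => g ⟪γ, X ω⟫) P := by
  have hg_cont : Continuous g := continuous_iff_continuousAt.2 fun x => (hg x).continuousAt
  refine ((integrable_const |g 0|).add
    (hX.integrable_mul_norm_pow_four_add_mul_norm_sq (‖γ‖ ^ 4) (‖γ‖ ^ 2))).mono'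
      (hg_cont.comp_aestronglyMeasurable
        ((innerSL ℝ γ).continuous.comp_aestronglyMeasurable hX.aestronglyMeasurable))
    (Eventually.of_forall fun ω => ?_)
  have hs : |⟪γ, X ω⟫| ≤ ‖γ‖ * ‖X ω‖ := abs_real_inner_le_norm γ (X ω)
  calc ‖g ⟪γ, X ω⟫‖ ≤ |g 0| + (|⟪γ, X ω⟫| ^ 3 + |⟪γ, X ω⟫|) * |⟪γ, X ω⟫| :=
        abs_le_of_abs_deriv_le_cube_add hg hg' _
    _ ≤ |g 0| + ((‖γ‖ * ‖X ω‖) ^ 3 + ‖γ‖ * ‖X ω‖) * (‖γ‖ * ‖X ω‖) := by gcongr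
    _ = |g 0| + (‖γ‖ ^ 4 * ‖X ω‖ ^ 4 + ‖γ‖ ^ 2 * ‖X ω‖ ^ 2) := by ring

theorem hasFDerivAt_integral_comp_inner (hX : MemLp X 4 P) {g g' : ℝ → ℝ}
    (hg : ∀ x, HasDerivAt g (g' x) x) (hg' : ∀ x, |g' x| ≤ |x| ^ 3 + |x|) (γ : E) :
    ∃ D : E →L[ℝ] ℝ, HasFDerivAt (fun x => ∫ ω, g ⟪x, X ω⟫ ∂P) D γ ∧
      D γ = ∫ ω, g' ⟪γ, X ω⟫ * ⟪γ, X ω⟫ ∂P ∧ Integrable (fun ω => g' ⟪γ, X ω⟫ * ⟪γ, X ω⟫) P := by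
  have hinner (x : E) : AEStronglyMeasurable (fun ω => ⟪x, X ω⟫) P :=
    (innerSL ℝ x).continuous.comp_aestronglyMeasurable hX.aestronglyMeasurable
  have hg'_meas : Measurable g' := by
    rw [show g' = deriv g from funext fun x => (hg x).deriv.symm]
    exact measurable_deriv g
  have hg_cont : Continuous g := continuous_iff_continuousAt.2 fun x => (hg x).continuousAt
  set R := ‖γ‖ + 1
  set F' : E → Ω → E →L[ℝ] ℝ := fun x ω => g' ⟪x, X ω⟫ • innerSL ℝ (X ω)
  have hF'_bound :
      ∀ ω, ∀ x ∈ Metric.ball γ 1, ‖F' x ω‖ ≤ R ^ 3 * ‖X ω‖ ^ 4 + R * ‖X ω‖ ^ 2 := by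
    intro ω x hx
    have hxR : ‖x‖ ≤ R := by
      linarith [norm_le_norm_add_norm_sub' x γ, mem_ball_iff_norm.1 hx]
    have hs : |⟪x, X ω⟫| ≤ R * ‖X ω‖ :=
      (abs_real_inner_le_norm x (X ω)).trans (by gcongr)
    calc ‖F' x ω‖ = |g' ⟪x, X ω⟫| * ‖X ω‖ := by
          rw [norm_smul, innerSL_apply_norm, Real.norm_eq_abs]
      _ ≤ (|⟪x, X ω⟫| ^ 3 + |⟪x, X ω⟫|) * ‖X ω‖ := by gcongr; exact hg' _
      _ ≤ ((R * ‖X ω‖) ^ 3 + R * ‖X ω‖) * ‖X ω‖ := by gcongr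
      _ = R ^ 3 * ‖X ω‖ ^ 4 + R * ‖X ω‖ ^ 2 := by ring
  have hbound_int := hX.integrable_mul_norm_pow_four_add_mul_norm_sq (R ^ 3) R
  have hF'_meas : AEStronglyMeasurable (F' γ) P :=
    (hg'_meas.comp_aemeasurable (hinner γ).aemeasurable).aestronglyMeasurable.smul
      ((innerSL ℝ).continuous.comp_aestronglyMeasurable hX.aestronglyMeasurable)
  have hF'_int : Integrable (F' γ) P :=
    hbound_int.mono' hF'_meas
      (Eventually.of_forall fun ω => hF'_bound ω γ (Metric.mem_ball_self one_pos))
  have h_diff : ∀ ω, ∀ x ∈ Metric.ball γ 1, HasFDerivAt (fun x => g ⟪x, X ω⟫) (F' x ω) x := by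
    intro ω x _
    have hlin : (fun x => ⟪x, X ω⟫) = innerSL ℝ (X ω) := funext fun x => real_inner_comm _ _
    exact (hg _).comp_hasFDerivAt x (hlin ▸ (innerSL ℝ (X ω)).hasFDerivAt)
  refine ⟨∫ ω, F' γ ω ∂P, hasFDerivAt_integral_of_dominated_of_fderiv_le
    (Metric.ball_mem_nhds γ one_pos)
    (Eventually.of_forall fun x => hg_cont.comp_aestronglyMeasurable (hinner x))
    (integrable_comp_inner hX hg hg' γ) hF'_meas
    (Eventually.of_forall hF'_bound) hbound_int (Eventually.of_forall h_diff), ?_, ?_⟩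
  · rw [ContinuousLinearMap.integral_apply hF'_int]
    simp only [F', smul_apply, innerSL_apply_apply, smul_eq_mul, real_inner_comm]
  · simpa only [F', smul_apply, innerSL_apply_apply, smul_eq_mul, real_inner_comm] using
      hF'_int.apply_continuousLinearMap γ

end DerivUnderIntegral

theorem two_mul_integral_sq_le {Ω : Type*} [MeasurableSpace Ω] {P : Measure Ω} {Y : Ω → ℝ}
    (h1 : Integrable (fun ω => |Y ω|) P) (h2 : Integrable (fun ω => Y ω ^ 2) P)
    (h3 : Integrable (fun ω => |Y ω| ^ 3) P) (t : ℝ) :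
    2 * t * ∫ ω, Y ω ^ 2 ∂P ≤ t ^ 2 * (∫ ω, |Y ω| ∂P) + ∫ ω, |Y ω| ^ 3 ∂P := by
  rw [← integral_const_mul, ← integral_const_mul, ← integral_add (h1.const_mul _) h3]
  refine integral_mono (h2.const_mul _) ((h1.const_mul _).add h3) fun ω => ?_
  -- `t² |y| - 2 t y² + |y|³ = |y| (t - |y|)²`
  rw [← sq_abs (Y ω)]
  nlinarith [mul_nonneg (abs_nonneg (Y ω)) (sq_nonneg (t - |Y ω|))]

section PsiTwo

variable {Ω E : Type*} [MeasurableSpace Ω] {P : Measure Ω}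
  [NormedAddCommGroup E] [InnerProductSpace ℝ E] {X : Ω → E} {M : ℝ}

/-- `‖X‖_{ψ₂} ≤ M`. -/
def PsiTwoNormLE (P : Measure Ω) (X : Ω → E) (M : ℝ) : Prop :=
  ∀ u : E, ‖u‖ = 1 → ∀ p : ℝ, 1 ≤ p →
    Integrable (fun ω => |⟪u, X ω⟫| ^ p) P ∧ (∫ ω, |⟪u, X ω⟫| ^ p ∂P) ^ (1 / p) ≤ Real.sqrt p * M

namespace PsiTwoNormLE

theorem integrable_abs_inner_pow (hX : PsiTwoNormLE P X M) {u : E} (hu : ‖u‖ = 1) {n : ℕ}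
    (hn : 1 ≤ n) : Integrable (fun ω => |⟪u, X ω⟫| ^ n) P := by
  simpa only [Real.rpow_natCast] using (hX u hu n (mod_cast hn)).1

theorem integral_abs_inner_pow_three_le (hX : PsiTwoNormLE P X M) (hM : 0 ≤ M) {u : E}
    (hu : ‖u‖ = 1) : ∫ ω, |⟪u, X ω⟫| ^ 3 ∂P ≤ 8 * M ^ 3 := by
  have h := (hX u hu 3 (by norm_num)).2
  have hsqrt : Real.sqrt 3 ≤ 2 := Real.sqrt_le_iff.2 ⟨by norm_num, by norm_num⟩
  rw [one_div, Real.rpow_inv_le_iff_of_pos (integral_nonneg fun ω => by positivity)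
    (by positivity) (by norm_num)] at h
  calc ∫ ω, |⟪u, X ω⟫| ^ 3 ∂P = ∫ ω, |⟪u, X ω⟫| ^ (3 : ℝ) ∂P := by
        simp_rw [← Real.rpow_natCast]; norm_num
    _ ≤ (Real.sqrt 3 * M) ^ (3 : ℝ) := h
    _ ≤ (2 * M) ^ (3 : ℝ) := by gcongr
    _ = 8 * M ^ 3 := by rw [show (3 : ℝ) = (3 : ℕ) by norm_num, Real.rpow_natCast]; ring

theorem memLp_four [FiniteDimensional ℝ E] (hψ : PsiTwoNormLE P X M)
    (hX : AEStronglyMeasurable X P) : MemLp X 4 P := by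
  set b := stdOrthonormalBasis ℝ E
  have hcoord : ∀ i, MemLp (fun ω => ⟪b i, X ω⟫) 4 P := fun i => by
    refine (integrable_norm_rpow_iff
      ((innerSL ℝ (b i)).continuous.comp_aestronglyMeasurable hX) (by norm_num) (by norm_num)).1 ?_
    simpa [Real.norm_eq_abs] using
      hψ.integrable_abs_inner_pow (b.orthonormal.1 i) (n := 4) (by norm_num)
  have hsum := memLp_finsetSum Finset.univ fun i _ =>
    (ContinuousLinearMap.toSpanSingleton ℝ (b i)).comp_memLp' (hcoord i)
  simpa [b.sum_repr'] using hsum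

theorem le_integral_abs_inner [IsProbabilityMeasure P] (hψ : PsiTwoNormLE P X M)
    (hM : 0 < M) {σ : ℝ} (hσ : 0 < σ) (hcov : ∀ u : E, σ ^ 2 * ‖u‖ ^ 2 ≤ ∫ ω, ⟪u, X ω⟫ ^ 2 ∂P)
    {u : E} (hu : ‖u‖ = 1) : σ ^ 4 / (8 * M ^ 3) ≤ ∫ ω, |⟪u, X ω⟫| ∂P := by
  have h1 : Integrable (fun ω => |⟪u, X ω⟫|) P := by
    simpa using hψ.integrable_abs_inner_pow hu (n := 1) le_rfl
  have h2 : Integrable (fun ω => ⟪u, X ω⟫ ^ 2) P := by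
    simpa using hψ.integrable_abs_inner_pow hu (n := 2) (by norm_num)
  have hS : σ ^ 2 ≤ ∫ ω, ⟪u, X ω⟫ ^ 2 ∂P := by simpa [hu] using hcov u
  have hB := hψ.integral_abs_inner_pow_three_le hM.le hu
  -- optimizing `two_mul_integral_sq_le` over `t` gives `(E Y²)² ≤ E|Y| E|Y|³`
  set t := 8 * M ^ 3 / σ ^ 2
  have ht : t * σ ^ 2 = 8 * M ^ 3 := div_mul_cancel₀ _ (by positivity)
  have key := two_mul_integral_sq_le h1 h2 (hψ.integrable_abs_inner_pow hu (by norm_num)) t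
  have hA : 8 * M ^ 3 ≤ t ^ 2 * ∫ ω, |⟪u, X ω⟫| ∂P := by
    nlinarith [mul_le_mul_of_nonneg_left hS (by positivity : 0 ≤ 2 * t)]
  rw [div_le_iff₀ (by positivity)]
  refine le_of_mul_le_mul_left ?_ (by positivity : 0 < 8 * M ^ 3)
  calc 8 * M ^ 3 * σ ^ 4 ≤ t ^ 2 * (∫ ω, |⟪u, X ω⟫| ∂P) * σ ^ 4 := by gcongr
    _ = 8 * M ^ 3 * ((∫ ω, |⟪u, X ω⟫| ∂P) * (8 * M ^ 3)) := by rw [← ht]; ring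

theorem mul_norm_le_integral_abs_inner [IsProbabilityMeasure P] (hψ : PsiTwoNormLE P X M)
    (hM : 0 < M) {σ : ℝ} (hσ : 0 < σ) (hcov : ∀ u : E, σ ^ 2 * ‖u‖ ^ 2 ≤ ∫ ω, ⟪u, X ω⟫ ^ 2 ∂P)
    (v : E) : σ ^ 4 / (8 * M ^ 3) * ‖v‖ ≤ ∫ ω, |⟪v, X ω⟫| ∂P := by
  rcases eq_or_ne v 0 with rfl | hv
  · simp
  have hnorm : ‖v‖ ≠ 0 := norm_ne_zero_iff.2 hv
  have hscale : ∀ ω, |⟪v, X ω⟫| = ‖v‖ * |⟪‖v‖⁻¹ • v, X ω⟫| := fun ω => by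
    rw [real_inner_smul_left, abs_mul, abs_inv, abs_norm, mul_inv_cancel_left₀ hnorm]
  simp_rw [hscale, integral_const_mul, mul_comm _ ‖v‖]
  exact mul_le_mul_of_nonneg_left
    (hψ.le_integral_abs_inner hM hσ hcov (norm_smul_inv_norm hv)) (norm_nonneg v)

end PsiTwoNormLE

end PsiTwo

theorem le_norm_gradient_mul_norm {E : Type*} [NormedAddCommGroup E] [InnerProductSpace ℝ E]
    [CompleteSpace E] {f : E → ℝ} {D : E →L[ℝ] ℝ} {γ : E} (hD : HasFDerivAt f D γ) :
    D γ ≤ ‖gradient f γ‖ * ‖γ‖ := by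
  rw [gradient, hD.fderiv, LinearIsometryEquiv.norm_map]
  exact (le_abs_self _).trans (D.le_opNorm γ)

theorem hasFDerivAt_half_mul_sq {E : Type*} [NormedAddCommGroup E] [NormedSpace ℝ E]
    (L : E →L[ℝ] ℝ) (c : ℝ) (γ : E) :
    HasFDerivAt (fun x => c / 2 * L x ^ 2) ((c * L γ) • L) γ :=
  ((L.hasFDerivAt.pow 2).const_mul (c / 2)).congr_fderiv (by ext; simp; ring)

section genLoss

variable {d : ℕ} {Ω : Type*} [MeasurableSpace Ω] {P : Measure Ω} {X : Ω → Pr d}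

theorem genLoss_hasFDerivAt [IsFiniteMeasure P] (hX : MemLp X 4 P) {g g' : ℝ → ℝ}
    (hg : ∀ x, HasDerivAt g (g' x) x) (hg' : ∀ x, |g' x| ≤ |x| ^ 3 + |x|) (lam : ℝ) (γ : Pr d) :
    ∃ D : Pr d →L[ℝ] ℝ, HasFDerivAt (genLoss P X g lam) D γ ∧
      D γ = (∫ ω, g' ⟪γ, X ω⟫ * ⟪γ, X ω⟫ ∂P) + lam * (WithLp.equiv 2 (ℝ × Vec d) γ).1 ^ 2 ∧
      Integrable (fun ω => g' ⟪γ, X ω⟫ * ⟪γ, X ω⟫) P := by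
  obtain ⟨D, hD, hDγ, hint⟩ := hasFDerivAt_integral_comp_inner hX hg hg' γ
  set α : Pr d →L[ℝ] ℝ := (ContinuousLinearMap.fst ℝ ℝ (Vec d)).comp
    (WithLp.prodContinuousLinearEquiv 2 ℝ ℝ (Vec d) : Pr d →L[ℝ] ℝ × Vec d)
  refine ⟨D + (lam * α γ) • α, hD.add (hasFDerivAt_half_mul_sq α lam γ), ?_, hint⟩
  have hα : α γ = (WithLp.equiv 2 (ℝ × Vec d) γ).1 := rfl
  simp only [add_apply, smul_apply, smul_eq_mul, hDγ, hα]
  ring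

theorem le_norm_gradient_genLoss [IsProbabilityMeasure P] {M σ lam : ℝ} (hM : 0 < M)
    (hσ : 0 < σ) (hlam : 0 ≤ lam) (hX : AEStronglyMeasurable X P) (hψ : PsiTwoNormLE P X M)
    (hcov : ∀ u : Pr d, σ ^ 2 * ‖u‖ ^ 2 ≤ ∫ ω, ⟪u, X ω⟫ ^ 2 ∂P) {g g' : ℝ → ℝ}
    (hg : ∀ x, HasDerivAt g (g' x) x) (hg' : ∀ x, |g' x| ≤ |x| ^ 3 + |x|)
    (hcoer : ∀ x, 6 * |x| - 13 ≤ g' x * x) {γ : Pr d}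
    (hγ : 3 / (σ ^ 4 / (16 * M ^ 3)) ≤ ‖γ‖) :
    σ ^ 4 / (16 * M ^ 3) ≤ ‖gradient (genLoss P X g lam) γ‖ := by
  set m := σ ^ 4 / (16 * M ^ 3)
  have hm : 0 < m := by positivity
  have hmγ : 3 ≤ m * ‖γ‖ := by rwa [div_le_iff₀ hm, mul_comm] at hγ
  have hX4 := hψ.memLp_four hX
  obtain ⟨D, hD, hDγ, hint⟩ := genLoss_hasFDerivAt hX4 hg hg' lam γ
  have habs_int : Integrable (fun ω => |⟪γ, X ω⟫|) P :=
    (((innerSL ℝ γ).comp_memLp' hX4).integrable (by norm_num)).abs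
  have habs : 2 * m * ‖γ‖ ≤ ∫ ω, |⟪γ, X ω⟫| ∂P := by
    convert hψ.mul_norm_le_integral_abs_inner hM hσ hcov γ using 2
    ring
  have hcoer_int : 6 * (∫ ω, |⟪γ, X ω⟫| ∂P) - 13 ≤ ∫ ω, g' ⟪γ, X ω⟫ * ⟪γ, X ω⟫ ∂P := by
    have h : ∫ ω, 6 * |⟪γ, X ω⟫| - 13 ∂P ≤ ∫ ω, g' ⟪γ, X ω⟫ * ⟪γ, X ω⟫ ∂P :=
      integral_mono ((habs_int.const_mul 6).sub (integrable_const 13)) hint fun ω => hcoer _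
    rwa [integral_sub (habs_int.const_mul 6) (integrable_const 13), integral_const_mul,
      integral_const, probReal_univ, one_smul] at h
  have hDγ_ge : m * ‖γ‖ ≤ D γ := by
    rw [hDγ]
    nlinarith [mul_nonneg hlam (sq_nonneg (WithLp.equiv 2 (ℝ × Vec d) γ).1)]
  have hγpos : 0 < ‖γ‖ := pos_of_mul_pos_right (by linarith) hm.le
  exact le_of_mul_le_mul_right (hDγ_ge.trans (le_norm_gradient_mul_norm hD)) hγpos

end genLoss

/-- if `‖X‖_{ψ₂} ≤ M` and `E(XX⊤) ⪰ σ²I`, and `b ≥ 2a ≥ 4`, then there is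
`m > 0` depending only on `M` and `σ` such that `‖∇L_λ(γ)‖₂ ≥ m` and `‖∇L^h_λ(γ)‖₂ ≥ m`
for every `γ` with `‖γ‖₂ ≥ 3/m`. -/
theorem population_gradient_lower_bound_far_away (M σ : ℝ) (hM : 0 < M) (hσ : 0 < σ) :
    ∃ m : ℝ, 0 < m ∧
      ∀ (d : ℕ) (Ω : Type) [MeasurableSpace Ω] (P : Measure Ω) [IsProbabilityMeasure P]
        (X : Ω → Pr d) (lam a b : ℝ),
        2 ≤ a → 2 * a ≤ b → 0 ≤ lam →
        Measurable X →
        (∀ u : Pr d, ‖u‖ = 1 → ∀ p : ℝ, 1 ≤ p →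
          Integrable (fun ω => |⟪u, X ω⟫| ^ p) P ∧
            (∫ ω, |⟪u, X ω⟫| ^ p ∂P) ^ (1 / p) ≤ Real.sqrt p * M) →
        (∀ u : Pr d, σ ^ 2 * ‖u‖ ^ 2 ≤ ∫ ω, ⟪u, X ω⟫ ^ 2 ∂P) →
        ∀ γ : Pr d, 3 / m ≤ ‖γ‖ →
          m ≤ ‖gradient (genLoss P X (fclip a b) lam) γ‖ ∧
          m ≤ ‖gradient (genLoss P X hq lam) γ‖ := by
  refine ⟨σ ^ 4 / (16 * M ^ 3), by positivity, ?_⟩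
  intro d Ω _ P _ X lam a b ha hb hlam hX hψ hcov γ hγ
  have hab : a < b := by linarith
  exact ⟨le_norm_gradient_genLoss hM hσ hlam hX.aestronglyMeasurable hψ hcov
      (fclip_hasDerivAt (by linarith) hab) (abs_fclipDeriv_le (by linarith) hab)
      (six_mul_abs_sub_le_fclipDeriv_mul ha hab) hγ,
    le_norm_gradient_genLoss hM hσ hlam hX.aestronglyMeasurable hψ hcov hq_hasDerivAt
      abs_cube_sub_le six_mul_abs_sub_le_cube_sub_mul hγ⟩
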